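/- Let r ≥ 1 and suppose (a_1,...,a_r) is an extreme point of the convex set 𝒜_r* with a_1 ≤ a_2 ≤ ⋯ ≤ a_r. Then a_1 < a_2 < ⋯ < a_r (the coordinates are strictly increasing). -/

import Mathlib

/-- `𝒜_r*` : the set of a ∈ ℝ^r with Σ a_j = r(r+1)/2 and Σ_{j∈E} a_j ≥ |E|(|E|+1)/2
for every subset E of the index set. -/
def Astar (r : ℕ) : Set (Fin r → ℝ) :=
  {a : Fin r → ℝ |
    (∑ j, a j) = (r : ℝ) * ((r : ℝ) + 1) / 2 ∧
    ∀ E : Finset (Fin r), (E.card : ℝ) * ((E.card : ℝ) + 1) / 2 ≤ ∑ j ∈ E, a j}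

/-!
An extreme point cannot have two equal coordinates `a p = a q`: moving along `e_p - e_q`
only changes the constraints indexed by sets `E` that separate `p` from `q`, and for those
the equality `a p = a q` forces strict inequality (add the constraints for `E ∪ {q}` and
`E \ {p}`). So `a ± t (e_p - e_q)` stays in `𝒜_r*` for small `t`, and `a` is their midpoint.
With injective coordinates, monotone means strictly monotone.
-/

open Filter Topology

theorem eq_zero_of_mem_extremePoints_of_eventually_add_smul_mem {E : Type*} [AddCommGroup E]
    [Module ℝ E] {A : Set E} {x v : E} (hx : x ∈ A.extremePoints ℝ)
    (hv : ∀ᶠ t : ℝ in 𝓝 0, x + t • v ∈ A) : v = 0 := by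
  obtain ⟨ε, hε, hball⟩ := Metric.eventually_nhds_iff.1 hv
  have hδ : |ε| / 2 < ε := by rw [abs_of_pos hε]; exact half_lt_self hε
  have hplus : x + (ε / 2) • v ∈ A := hball (by simpa using hδ)
  have hminus : x + (-(ε / 2)) • v ∈ A := hball (by simpa using hδ)
  have hmid : x ∈ openSegment ℝ (x + (ε / 2) • v) (x + (-(ε / 2)) • v) :=
    ⟨1 / 2, 1 / 2, by norm_num, by norm_num, by norm_num, by module⟩
  have hshift : (ε / 2) • v = 0 := by simpa using hx.2 hplus hminus hmid
  exact (smul_eq_zero.1 hshift).resolve_left (half_pos hε).ne'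

namespace Astar

variable {r : ℕ} {a : Fin r → ℝ}

theorem lt_sum_of_apply_eq (ha : a ∈ Astar r) {p q : Fin r} (heq : a p = a q)
    {E : Finset (Fin r)} (hp : p ∈ E) (hq : q ∉ E) :
    (E.card : ℝ) * ((E.card : ℝ) + 1) / 2 < ∑ j ∈ E, a j := by
  have hinsert := ha.2 (insert q E)
  have herase := ha.2 (E.erase p)
  rw [Finset.card_insert_of_notMem hq, Finset.sum_insert hq] at hinsert
  rw [Finset.card_erase_of_mem hp, Nat.cast_pred (Finset.card_pos.2 ⟨p, hp⟩)] at herase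
  have hsplit := Finset.sum_erase_add E a hp
  push_cast at hinsert
  linarith

theorem eventually_add_smul_mem (ha : a ∈ Astar r) {v : Fin r → ℝ} (hv : ∑ j, v j = 0)
    (hslack : ∀ E : Finset (Fin r),
      ∑ j ∈ E, v j = 0 ∨ (E.card : ℝ) * ((E.card : ℝ) + 1) / 2 < ∑ j ∈ E, a j) :
    ∀ᶠ t : ℝ in 𝓝 0, a + t • v ∈ Astar r := by
  have hsum (E : Finset (Fin r)) (t : ℝ) :
      ∑ j ∈ E, (a + t • v) j = ∑ j ∈ E, a j + t * ∑ j ∈ E, v j := by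
    simp [Finset.sum_add_distrib, Finset.mul_sum]
  refine (Eventually.of_forall fun t => ?_).and (eventually_all.2 fun E => ?_)
  · rw [hsum, hv, mul_zero, add_zero]
    exact ha.1
  · rcases hslack E with hzero | hlt
    · exact Eventually.of_forall fun t => by rw [hsum, hzero, mul_zero, add_zero]; exact ha.2 E
    · have hcont : Tendsto (fun t : ℝ => ∑ j ∈ E, a j + t * ∑ j ∈ E, v j) (𝓝 0)
          (𝓝 (∑ j ∈ E, a j)) :=
        Continuous.tendsto' (by fun_prop) 0 _ (by simp)
      exact (hcont.eventually_const_lt hlt).mono fun t ht => by rw [hsum]; exact ht.le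

theorem injective_of_mem_extremePoints (ha : a ∈ (Astar r).extremePoints ℝ) :
    Function.Injective a := by
  intro p q heq
  by_contra hpq
  set v : Fin r → ℝ := Pi.single p 1 - Pi.single q 1
  have hsum (E : Finset (Fin r)) :
      ∑ j ∈ E, v j = (if p ∈ E then 1 else 0) - (if q ∈ E then 1 else 0) := by
    simp only [v, Pi.sub_apply, Finset.sum_sub_distrib, Finset.sum_pi_single']
  have hslack (E : Finset (Fin r)) :
      ∑ j ∈ E, v j = 0 ∨ (E.card : ℝ) * ((E.card : ℝ) + 1) / 2 < ∑ j ∈ E, a j := by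
    by_cases hp : p ∈ E <;> by_cases hq : q ∈ E
    · left; simp [hsum, hp, hq]
    · exact Or.inr (lt_sum_of_apply_eq ha.1 heq hp hq)
    · exact Or.inr (lt_sum_of_apply_eq ha.1 heq.symm hq hp)
    · left; simp [hsum, hp, hq]
  have hv : v = 0 := eq_zero_of_mem_extremePoints_of_eventually_add_smul_mem ha
    (eventually_add_smul_mem ha.1 (by simp [hsum]) hslack)
  simpa [v, hpq] using congrFun hv p

end Astar

theorem stmt_10_general (r : ℕ) (a : Fin r → ℝ)
    (hmono : Monotone a)
    (ha : a ∈ Set.extremePoints ℝ (Astar r)) :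
    StrictMono a :=
  hmono.strictMono_of_injective (Astar.injective_of_mem_extremePoints ha)

/-- if (a_1,...,a_r) is an extreme point of 𝒜_r* with nondecreasing
coordinates, then its coordinates are strictly increasing. -/
theorem stmt_10 (r : ℕ) (hr : 1 ≤ r) (a : Fin r → ℝ)
    (hmono : Monotone a)
    (ha : a ∈ Set.extremePoints ℝ (Astar r)) :
    StrictMono a :=
  stmt_10_general r a hmono ha
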